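/- arXiv:1804.01973 — 2 statements merged into one kernel-verified Lean document; each statement's English description precedes it below -/
import Mathlib

section
/- Let T be a random variable taking values t_1 < t_2 < ⋯ < t_m (positive reals) with probabilities p_1, …, p_m summing to 1, and let T_max = t_m. Let F be its distribution function and F⁻¹ the generalized inverse distribution function. Then ∫_0^1 F⁻¹(p)/(2√(1−p)) dp ≤ t_1 + (‖T‖_2/√2)·√(ln(T_max/t_1)), where ‖T‖_2 = √(Σ_j p_j t_j²). -/
/-!
Write `w q = 1 / (2 √(1 - q))`, `T = t_max` and `c = t₀ / T`, and split `[0, 1]` at `1 - c²`.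
On `[1 - c², 1]` we use `F⁻¹ ≤ T` and `∫_{1-c²}^1 w = c`, which contributes `T c = t₀`.
On `[0, 1 - c²]` Cauchy–Schwarz bounds the integral by `‖F⁻¹‖₂ (∫_0^{1-c²} w²)^{1/2}`, where
`∫ (F⁻¹)² ≤ Σ p_j t_j²` because `F⁻¹` is a step function, and `∫_0^{1-c²} w² = ln(T / t₀) / 2`.
-/

/-- The distribution function `F(x) = Σ_{j : t_j ≤ x} p_j` of a finitely supported
random variable taking value `t j` with probability `p j`. -/
noncomputable def cdf {m : ℕ} (t p : Fin m → ℝ) (x : ℝ) : ℝ :=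
  ∑ j, if t j ≤ x then p j else 0

/-- The generalized inverse distribution function `F⁻¹(q) = inf {x : F(x) ≥ q}`. -/
noncomputable def invCdf {m : ℕ} (t p : Fin m → ℝ) (q : ℝ) : ℝ :=
  sInf {x : ℝ | q ≤ cdf t p x}

open MeasureTheory Set intervalIntegral

theorem integral_mul_le_sqrt_mul_sqrt {α : Type*} [MeasurableSpace α]
    {μ : Measure α} {f g : α → ℝ} (hf : MemLp f 2 μ) (hg : MemLp g 2 μ) :
    ∫ a, f a * g a ∂μ ≤ √(∫ a, f a ^ 2 ∂μ) * √(∫ a, g a ^ 2 ∂μ) := by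
  have h2 : ENNReal.ofReal 2 = 2 := ENNReal.ofReal_ofNat 2
  have hfg : Integrable (fun a => ‖f a‖ * ‖g a‖) μ := hf.norm.integrable_mul hg.norm
  calc ∫ a, f a * g a ∂μ ≤ ∫ a, ‖f a‖ * ‖g a‖ ∂μ :=
        integral_mono (hf.integrable_mul hg) hfg fun a => (le_abs_self _).trans_eq (abs_mul _ _)
    _ ≤ (∫ a, ‖f a‖ ^ (2:ℝ) ∂μ) ^ (1 / 2 : ℝ) * (∫ a, ‖g a‖ ^ (2:ℝ) ∂μ) ^ (1 / 2 : ℝ) :=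
        integral_mul_norm_le_Lp_mul_Lq Real.HolderConjugate.two_two (h2 ▸ hf) (h2 ▸ hg)
    _ = √(∫ a, f a ^ 2 ∂μ) * √(∫ a, g a ^ 2 ∂μ) := by
        simp only [Real.rpow_two, Real.norm_eq_abs, sq_abs, ← Real.sqrt_eq_rpow]

section Cdf

variable {m : ℕ} {t p : Fin m → ℝ} {q : ℝ}

lemma cdf_nonneg (hp : ∀ j, 0 ≤ p j) (x : ℝ) : 0 ≤ cdf t p x :=
  Finset.sum_nonneg fun j _ => by split_ifs <;> simp [hp j]

lemma cdf_le_one (hp : ∀ j, 0 ≤ p j) (hps : ∑ j, p j = 1) (x : ℝ) : cdf t p x ≤ 1 :=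
  hps ▸ Finset.sum_le_sum fun j _ => by split_ifs <;> simp [hp j]

lemma invCdf_of_nonpos (hp : ∀ j, 0 ≤ p j) (hq : q ≤ 0) : invCdf t p q = 0 := by
  have : {x | q ≤ cdf t p x} = univ := eq_univ_of_forall fun x => hq.trans (cdf_nonneg hp x)
  rw [invCdf, this, Real.sInf_univ]

lemma invCdf_of_one_lt (hp : ∀ j, 0 ≤ p j) (hps : ∑ j, p j = 1) (hq : 1 < q) :
    invCdf t p q = 0 := by
  have : {x | q ≤ cdf t p x} = ∅ :=
    eq_empty_of_forall_notMem fun x hx => hq.not_ge (hx.trans (cdf_le_one hp hps x))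
  rw [invCdf, this, Real.sInf_empty]

end Cdf

section InvCdf

variable {n : ℕ} {t p : Fin (n + 1) → ℝ} {q x : ℝ}

lemma cdf_eq_zero_of_lt (ht : Monotone t) (hx : x < t 0) : cdf t p x = 0 :=
  Finset.sum_eq_zero fun j _ => if_neg fun h => ((ht (Fin.zero_le j)).trans h).not_gt hx

lemma cdf_last (ht : Monotone t) (hps : ∑ j, p j = 1) : cdf t p (t (Fin.last n)) = 1 :=
  hps ▸ Finset.sum_congr rfl fun j _ => if_pos (ht (Fin.le_last j))

lemma t_zero_le_of_le_cdf (ht : Monotone t) (hq : 0 < q) (hx : q ≤ cdf t p x) : t 0 ≤ x :=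
  not_lt.1 fun h => hq.not_ge (hx.trans_eq (cdf_eq_zero_of_lt ht h))

lemma invCdf_le_of_le_cdf (ht : Monotone t) (hp : ∀ j, 0 ≤ p j) (hx0 : 0 ≤ x)
    (hx : q ≤ cdf t p x) : invCdf t p q ≤ x := by
  rcases le_or_gt q 0 with hq | hq
  · exact (invCdf_of_nonpos hp hq).trans_le hx0
  · exact csInf_le ⟨t 0, fun _ => t_zero_le_of_le_cdf ht hq⟩ hx

lemma invCdf_mem_Icc (ht : Monotone t) (ht0 : 0 < t 0) (hp : ∀ j, 0 ≤ p j)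
    (hps : ∑ j, p j = 1) (q : ℝ) : invCdf t p q ∈ Icc 0 (t (Fin.last n)) := by
  have hlast : 0 ≤ t (Fin.last n) := ht0.le.trans (ht (Fin.zero_le _))
  rcases le_or_gt q 0 with hq | hq
  · rw [invCdf_of_nonpos hp hq]
    exact ⟨le_rfl, hlast⟩
  rcases le_or_gt q 1 with hq1 | hq1
  · have hq1' : q ≤ cdf t p (t (Fin.last n)) := (cdf_last ht hps).symm ▸ hq1
    exact ⟨ht0.le.trans (le_csInf ⟨_, hq1'⟩ fun _ => t_zero_le_of_le_cdf ht hq),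
      invCdf_le_of_le_cdf ht hp hlast hq1'⟩
  · rw [invCdf_of_one_lt hp hps hq1]
    exact ⟨le_rfl, hlast⟩

lemma norm_invCdf_le (ht : Monotone t) (ht0 : 0 < t 0) (hp : ∀ j, 0 ≤ p j)
    (hps : ∑ j, p j = 1) (q : ℝ) : ‖invCdf t p q‖ ≤ t (Fin.last n) := by
  obtain ⟨h0, hle⟩ := invCdf_mem_Icc ht ht0 hp hps q
  rwa [Real.norm_of_nonneg h0]

lemma monotoneOn_invCdf (ht : Monotone t) (ht0 : 0 < t 0) (hp : ∀ j, 0 ≤ p j)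
    (hps : ∑ j, p j = 1) : MonotoneOn (invCdf t p) (Icc 0 1) := by
  intro q hq q' hq' hqq'
  rcases hq.1.eq_or_lt with rfl | hq0
  · exact (invCdf_of_nonpos hp le_rfl).trans_le (invCdf_mem_Icc ht ht0 hp hps q').1
  · exact csInf_le_csInf ⟨t 0, fun _ => t_zero_le_of_le_cdf ht hq0⟩
      ⟨_, (cdf_last ht hps).symm ▸ hq'.2⟩ fun _ hx => hqq'.trans hx

lemma monotoneOn_invCdf_sq (ht : Monotone t) (ht0 : 0 < t 0) (hp : ∀ j, 0 ≤ p j)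
    (hps : ∑ j, p j = 1) : MonotoneOn (fun q => invCdf t p q ^ 2) (Icc 0 1) :=
  fun q hq _ hq' hqq' => pow_le_pow_left₀ (invCdf_mem_Icc ht ht0 hp hps q).1
    (monotoneOn_invCdf ht ht0 hp hps hq hq' hqq') 2

lemma aestronglyMeasurable_invCdf (ht : Monotone t) (ht0 : 0 < t 0) (hp : ∀ j, 0 ≤ p j)
    (hps : ∑ j, p j = 1) {s : Set ℝ} (hs : s ⊆ Icc 0 1) :
    AEStronglyMeasurable (invCdf t p) (volume.restrict s) :=
  (aemeasurable_restrict_of_monotoneOn measurableSet_Icc (monotoneOn_invCdf ht ht0 hp hps)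
    |>.mono_measure (Measure.restrict_mono hs le_rfl)).aestronglyMeasurable

end InvCdf

section PartialMass

variable {m : ℕ} (p : Fin m → ℝ)

noncomputable def partialMass (k : ℕ) : ℝ :=
  ∑ j : Fin m, if (j : ℕ) < k then p j else 0

lemma partialMass_zero : partialMass p 0 = 0 := by
  simp [partialMass]

lemma partialMass_of_le {k : ℕ} (hk : m ≤ k) : partialMass p k = ∑ j, p j :=
  Finset.sum_congr rfl fun j _ => if_pos (j.2.trans_le hk)

lemma partialMass_succ_sub (j : Fin m) : partialMass p (j + 1) - partialMass p j = p j := by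
  rw [partialMass, partialMass, ← Finset.sum_sub_distrib, Finset.sum_eq_single j]
  · simp
  · intro i _ hij
    have : (i : ℕ) ≠ j := Fin.val_ne_of_ne hij
    split_ifs <;> first | omega | simp
  · simp

variable {p}

lemma monotone_partialMass (hp : ∀ j, 0 ≤ p j) : Monotone (partialMass p) :=
  fun k l hkl => Finset.sum_le_sum fun j _ => by split_ifs <;> first | rfl | exact hp j | omega

lemma partialMass_mem_Icc (hp : ∀ j, 0 ≤ p j) (hps : ∑ j, p j = 1) (k : ℕ) :
    partialMass p k ∈ Icc (0 : ℝ) 1 :=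
  ⟨partialMass_zero p ▸ monotone_partialMass hp k.zero_le,
    hps ▸ Finset.sum_le_sum fun j _ => by split_ifs; exacts [le_rfl, hp j]⟩

lemma partialMass_succ_le_cdf {t : Fin m → ℝ} (ht : Monotone t) (hp : ∀ j, 0 ≤ p j)
    (j : Fin m) : partialMass p (j + 1) ≤ cdf t p (t j) :=
  Finset.sum_le_sum fun i _ => by
    split_ifs with hi hij
    · rfl
    · exact absurd (ht (Fin.le_def.2 (Nat.lt_succ_iff.1 hi))) hij
    · exact hp i
    · rfl

end PartialMass

section SecondMoment

variable {n : ℕ} {t p : Fin (n + 1) → ℝ}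

lemma intervalIntegrable_invCdf_sq (ht : Monotone t) (ht0 : 0 < t 0) (hp : ∀ j, 0 ≤ p j)
    (hps : ∑ j, p j = 1) {a b : ℝ} (ha : a ∈ Icc (0 : ℝ) 1) (hb : b ∈ Icc (0 : ℝ) 1) :
    IntervalIntegrable (fun q => invCdf t p q ^ 2) volume a b :=
  ((monotoneOn_invCdf_sq ht ht0 hp hps).mono (uIcc_subset_Icc ha hb)).intervalIntegrable

theorem integral_sq_invCdf_le (ht : Monotone t) (ht0 : 0 < t 0) (hp : ∀ j, 0 ≤ p j)
    (hps : ∑ j, p j = 1) : ∫ q in (0 : ℝ)..1, invCdf t p q ^ 2 ≤ ∑ j, p j * t j ^ 2 := by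
  -- `invCdf ≤ t j` on `[F(t_{j-1}), F(t_j)]`, an interval of length `p j`.
  have hS := partialMass_mem_Icc hp hps
  have hbound (j : Fin (n + 1)) {q : ℝ}
      (hq : q ∈ Icc (partialMass p j) (partialMass p (j + 1))) : invCdf t p q ^ 2 ≤ t j ^ 2 :=
    pow_le_pow_left₀ (invCdf_mem_Icc ht ht0 hp hps q).1 (invCdf_le_of_le_cdf ht hp
      (ht0.le.trans (ht (Fin.zero_le j))) (hq.2.trans (partialMass_succ_le_cdf ht hp j))) 2
  calc ∫ q in (0 : ℝ)..1, invCdf t p q ^ 2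
      = ∑ k ∈ Finset.range (n + 1),
          ∫ q in partialMass p k..partialMass p (k + 1), invCdf t p q ^ 2 := by
        rw [sum_integral_adjacent_intervals fun k _ =>
            intervalIntegrable_invCdf_sq ht ht0 hp hps (hS k) (hS (k + 1)),
          partialMass_zero, partialMass_of_le p le_rfl, hps]
    _ = ∑ j : Fin (n + 1), ∫ q in partialMass p j..partialMass p (j + 1), invCdf t p q ^ 2 :=
        (Fin.sum_univ_eq_sum_range (fun k => ∫ q in partialMass p k..partialMass p (k + 1),
          invCdf t p q ^ 2) _).symm
    _ ≤ ∑ j : Fin (n + 1), ∫ _ in partialMass p j..partialMass p (j + 1), t j ^ 2 :=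
        Finset.sum_le_sum fun j _ => integral_mono_on (monotone_partialMass hp j.val.le_succ)
          (intervalIntegrable_invCdf_sq ht ht0 hp hps (hS _) (hS _)) intervalIntegrable_const
          fun q hq => hbound j hq
    _ = ∑ j, p j * t j ^ 2 := by
        simp only [intervalIntegral.integral_const, partialMass_succ_sub, smul_eq_mul]

end SecondMoment

section Weight

lemma inv_two_mul_sqrt_eq_rpow {u : ℝ} (hu : 0 ≤ u) : (2 * √u)⁻¹ = u ^ (-(1 / 2) : ℝ) / 2 := by
  rw [Real.sqrt_eq_rpow, Real.rpow_neg hu]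
  ring

lemma inv_two_mul_sqrt_sq {u : ℝ} (hu : 0 ≤ u) : (2 * √u)⁻¹ ^ 2 = u⁻¹ / 4 := by
  rw [inv_pow, mul_pow, Real.sq_sqrt hu, mul_inv, div_eq_mul_inv, mul_comm]
  norm_num

lemma integral_inv_two_mul_sqrt {c : ℝ} (hc : 0 ≤ c) : ∫ u in (0 : ℝ)..c, (2 * √u)⁻¹ = √c := by
  rw [integral_congr fun u hu => inv_two_mul_sqrt_eq_rpow (uIcc_of_le hc ▸ hu).1,
    intervalIntegral.integral_div, integral_rpow (Or.inl (by norm_num)), Real.sqrt_eq_rpow]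
  norm_num
  ring

lemma intervalIntegrable_inv_two_mul_sqrt_one_sub {a b : ℝ} (ha : a ∈ Icc (0 : ℝ) 1)
    (hb : b ∈ Icc (0 : ℝ) 1) :
    IntervalIntegrable (fun q => (2 * √(1 - q))⁻¹) volume a b := by
  have h : IntervalIntegrable (fun u => (2 * √u)⁻¹) volume 0 1 :=
    intervalIntegrable_of_integral_ne_zero (by rw [integral_inv_two_mul_sqrt zero_le_one]; simp)
  refine (by simpa using (h.comp_sub_left 1).symm : IntervalIntegrable _ volume 0 1).mono_set ?_
  rw [uIcc_of_le zero_le_one]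
  exact uIcc_subset_Icc ha hb

lemma integral_inv_two_mul_sqrt_one_sub {c : ℝ} (hc : 0 ≤ c) :
    ∫ q in 1 - c ^ 2..1, (2 * √(1 - q))⁻¹ = c := by
  rw [integral_comp_sub_left (fun u => (2 * √u)⁻¹), sub_self, sub_sub_cancel,
    integral_inv_two_mul_sqrt (sq_nonneg c), Real.sqrt_sq hc]

lemma integral_inv_two_mul_sqrt_one_sub_sq {c : ℝ} (hc : 0 < c) :
    ∫ q in (0 : ℝ)..1 - c ^ 2, (2 * √(1 - q))⁻¹ ^ 2 = Real.log c⁻¹ / 2 := by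
  have hle (q : ℝ) (hq : q ∈ uIcc 0 (1 - c ^ 2)) : 0 ≤ 1 - q :=
    sub_nonneg.2 (hq.2.trans (max_le zero_le_one (by linarith [pow_pos hc 2])))
  rw [integral_congr fun q hq => inv_two_mul_sqrt_sq (hle q hq), intervalIntegral.integral_div,
    integral_comp_sub_left (fun u => u⁻¹), sub_zero, sub_sub_cancel,
    integral_inv (notMem_uIcc_of_lt (pow_pos hc 2) one_pos), one_div, Real.log_inv,
    Real.log_inv, Real.log_pow]
  ring

end Weight

section Estimates

variable {n : ℕ} {t p : Fin (n + 1) → ℝ}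

lemma intervalIntegrable_invCdf_mul (ht : Monotone t) (ht0 : 0 < t 0) (hp : ∀ j, 0 ≤ p j)
    (hps : ∑ j, p j = 1) {a b : ℝ} (ha : a ∈ Icc (0 : ℝ) 1) (hb : b ∈ Icc (0 : ℝ) 1) :
    IntervalIntegrable (fun q => invCdf t p q * (2 * √(1 - q))⁻¹) volume a b := by
  have hw := intervalIntegrable_inv_two_mul_sqrt_one_sub ha hb
  rw [intervalIntegrable_iff] at hw ⊢
  exact hw.bdd_mul
    (aestronglyMeasurable_invCdf ht ht0 hp hps (uIoc_subset_uIcc.trans (uIcc_subset_Icc ha hb)))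
    (ae_of_all _ (norm_invCdf_le ht ht0 hp hps))

theorem integral_invCdf_mul_le_last_mul (ht : Monotone t) (ht0 : 0 < t 0)
    (hp : ∀ j, 0 ≤ p j) (hps : ∑ j, p j = 1) {c : ℝ} (hc0 : 0 ≤ c) (hc1 : c ≤ 1) :
    ∫ q in 1 - c ^ 2..1, invCdf t p q * (2 * √(1 - q))⁻¹ ≤ t (Fin.last n) * c := by
  have hb : 1 - c ^ 2 ∈ Icc (0 : ℝ) 1 := ⟨by nlinarith, by nlinarith⟩
  have h1 : (1 : ℝ) ∈ Icc (0 : ℝ) 1 := ⟨zero_le_one, le_rfl⟩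
  calc ∫ q in 1 - c ^ 2..1, invCdf t p q * (2 * √(1 - q))⁻¹
      ≤ ∫ q in 1 - c ^ 2..1, t (Fin.last n) * (2 * √(1 - q))⁻¹ :=
        integral_mono_on hb.2 (intervalIntegrable_invCdf_mul ht ht0 hp hps hb h1)
          ((intervalIntegrable_inv_two_mul_sqrt_one_sub hb h1).const_mul _) fun q _ =>
            mul_le_mul_of_nonneg_right (invCdf_mem_Icc ht ht0 hp hps q).2 (by positivity)
    _ = t (Fin.last n) * c := by
        rw [intervalIntegral.integral_const_mul, integral_inv_two_mul_sqrt_one_sub hc0]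

theorem integral_invCdf_mul_le_sqrt_mul_sqrt (ht : Monotone t) (ht0 : 0 < t 0)
    (hp : ∀ j, 0 ≤ p j) (hps : ∑ j, p j = 1) {b : ℝ} (hb0 : 0 ≤ b) (hb1 : b < 1) :
    ∫ q in (0 : ℝ)..b, invCdf t p q * (2 * √(1 - q))⁻¹ ≤
      √(∑ j, p j * t j ^ 2) * √(∫ q in (0 : ℝ)..b, (2 * √(1 - q))⁻¹ ^ 2) := by
  have hF : MemLp (invCdf t p) 2 (volume.restrict (Ioc 0 b)) :=
    .of_bound (aestronglyMeasurable_invCdf ht ht0 hp hps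
        (Ioc_subset_Icc_self.trans (Icc_subset_Icc le_rfl hb1.le))) (t (Fin.last n))
      (ae_of_all _ (norm_invCdf_le ht ht0 hp hps))
  have hw : MemLp (fun q => (2 * √(1 - q))⁻¹) 2 (volume.restrict (Ioc 0 b)) := by
    refine (memLp_two_iff_integrable_sq (by fun_prop)).2 <|
      (intervalIntegrable_iff_integrableOn_Ioc_of_le hb0).1 <| ContinuousOn.intervalIntegrable ?_
    refine ((ContinuousOn.inv₀ (by fun_prop) fun q hq => ?_).pow 2)
    rw [uIcc_of_le hb0] at hq
    have : 0 < √(1 - q) := Real.sqrt_pos.2 (by linarith [hq.2])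
    positivity
  have hF2 : ∫ q in (0 : ℝ)..b, invCdf t p q ^ 2 ≤ ∑ j, p j * t j ^ 2 :=
    (integral_mono_interval le_rfl hb0 hb1.le (ae_of_all _ fun _ => sq_nonneg _)
      (intervalIntegrable_invCdf_sq ht ht0 hp hps (left_mem_Icc.2 zero_le_one)
        (right_mem_Icc.2 zero_le_one))).trans (integral_sq_invCdf_le ht ht0 hp hps)
  simp only [integral_of_le hb0] at hF2 ⊢
  exact (integral_mul_le_sqrt_mul_sqrt hF hw).trans
    (mul_le_mul_of_nonneg_right (Real.sqrt_le_sqrt hF2) (Real.sqrt_nonneg _))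

end Estimates

/-- For a random variable `T` with values `0 < t_1 < ⋯ < t_m` and probabilities
`p_1, …, p_m` summing to 1,
`∫_0^1 F⁻¹(p)/(2√(1−p)) dp ≤ t_1 + (‖T‖₂/√2)·√(ln(T_max/t_1))`,
where `‖T‖₂ = √(Σ_j p_j t_j²)` and `T_max = t_m`. -/
theorem integral_invCdf_bound (n : ℕ) (t p : Fin (n + 1) → ℝ)
    (ht : StrictMono t) (ht0 : 0 < t 0)
    (hp : ∀ j, 0 ≤ p j) (hps : ∑ j, p j = 1) :
    ∫ q in (0:ℝ)..1, invCdf t p q / (2 * Real.sqrt (1 - q)) ≤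
      t 0 + (Real.sqrt (∑ j, p j * t j ^ 2) / Real.sqrt 2) *
        Real.sqrt (Real.log (t (Fin.last n) / t 0)) := by
  have htm := ht.monotone
  have hT : 0 < t (Fin.last n) := ht0.trans_le (htm (Fin.zero_le _))
  set c := t 0 / t (Fin.last n)
  have hc0 : 0 < c := div_pos ht0 hT
  have hc1 : c ≤ 1 := (div_le_one hT).2 (htm (Fin.zero_le _))
  have hb : 1 - c ^ 2 ∈ Icc (0 : ℝ) 1 := ⟨by nlinarith, by nlinarith⟩
  have hhead := integral_invCdf_mul_le_sqrt_mul_sqrt htm ht0 hp hps hb.1 (by nlinarith)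
  rw [integral_inv_two_mul_sqrt_one_sub_sq hc0, inv_div] at hhead
  calc ∫ q in (0:ℝ)..1, invCdf t p q / (2 * √(1 - q))
      = (∫ q in (0:ℝ)..1 - c ^ 2, invCdf t p q * (2 * √(1 - q))⁻¹) +
          ∫ q in 1 - c ^ 2..1, invCdf t p q * (2 * √(1 - q))⁻¹ := by
        simp only [div_eq_mul_inv]
        exact (integral_add_adjacent_intervals
          (intervalIntegrable_invCdf_mul htm ht0 hp hps ⟨le_rfl, zero_le_one⟩ hb)
          (intervalIntegrable_invCdf_mul htm ht0 hp hps hb ⟨zero_le_one, le_rfl⟩)).symm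
    _ ≤ √(∑ j, p j * t j ^ 2) * √(Real.log (t (Fin.last n) / t 0) / 2) + t (Fin.last n) * c :=
        add_le_add hhead (integral_invCdf_mul_le_last_mul htm ht0 hp hps hc0.le hc1)
    _ = _ := by
        rw [Real.sqrt_div' _ zero_le_two, mul_div_cancel₀ _ hT.ne']
        ring
end

section
/- Let C ∈ ℝ^{N×M} be the weighted signed incidence matrix C = B√W of a connected weighted graph, and let i_ext ∈ ℝ^N be a vector whose entries sum to 0. Then i_ext lies in the column space of C. Moreover, if v = L⁺ i_ext with L = CCᵀ the Laplacian, and i = W Bᵀ v, then C̄⁺ applied to (i_ext, 0) equals (0, W^{−1/2} i), where C̄ = [[0, C],[Cᵀ, 0]]. -/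
open Matrix

/-- For a connected weighted graph with incidence matrix `B`, weights `w > 0`, weighted
incidence matrix `C = B√W` (connectivity: `ker Cᵀ` consists of constant vectors), and an
external current `i_ext` whose entries sum to `0`: `i_ext` lies in the column space of `C`;
moreover, with `v = L⁺ i_ext` (`L = CCᵀ` the Laplacian), `i = W Bᵀ v`, and `C̄ = [[0,C],[Cᵀ,0]]`,
the pseudoinverse satisfies `C̄⁺ (i_ext, 0) = (0, W^{−1/2} i)`. The pseudoinverses `L⁺, C̄⁺`
are characterized by the four Penrose conditions. -/
theorem electrical_network_pseudoinverse (N M : ℕ)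
    (B : Matrix (Fin N) (Fin M) ℝ) (w : Fin M → ℝ) (hw : ∀ e, 0 < w e)
    (C : Matrix (Fin N) (Fin M) ℝ)
    (hC : C = B * Matrix.diagonal (fun e => Real.sqrt (w e)))
    (hconn : ∀ x : Fin N → ℝ, Cᵀ.mulVec x = 0 → ∃ a : ℝ, x = fun _ => a)
    (iext : Fin N → ℝ) (hsum : ∑ u, iext u = 0)
    (L Lp : Matrix (Fin N) (Fin N) ℝ) (hL : L = C * Cᵀ)
    (hLp1 : L * Lp * L = L) (hLp2 : Lp * L * Lp = Lp)
    (hLp3 : (L * Lp)ᵀ = L * Lp) (hLp4 : (Lp * L)ᵀ = Lp * L)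
    (Cb Cbp : Matrix (Fin N ⊕ Fin M) (Fin N ⊕ Fin M) ℝ)
    (hCb : Cb = Matrix.fromBlocks 0 C Cᵀ 0)
    (hCbp1 : Cb * Cbp * Cb = Cb) (hCbp2 : Cbp * Cb * Cbp = Cbp)
    (hCbp3 : (Cb * Cbp)ᵀ = Cb * Cbp) (hCbp4 : (Cbp * Cb)ᵀ = Cbp * Cb)
    (v : Fin N → ℝ) (hv : v = Lp.mulVec iext)
    (i : Fin M → ℝ) (hi : i = (Matrix.diagonal w * Bᵀ).mulVec v) :
    (∃ y : Fin M → ℝ, C.mulVec y = iext) ∧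
    Cbp.mulVec (Sum.elim iext (0 : Fin M → ℝ)) =
      Sum.elim (0 : Fin N → ℝ) ((Matrix.diagonal (fun e => (Real.sqrt (w e))⁻¹)).mulVec i) := by
  -- Symmetry of L
  have hLsymm : Lᵀ = L := by rw [hL, Matrix.transpose_mul, Matrix.transpose_transpose]
  have hLP : L * (L * Lp) = L := by
    calc L * (L * Lp) = ((L * Lp)ᵀ * Lᵀ)ᵀ := by
          rw [Matrix.transpose_mul, Matrix.transpose_transpose, Matrix.transpose_transpose]
      _ = (L * Lp * L)ᵀ := by rw [hLp3, hLsymm]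
      _ = L := by rw [hLp1, hLsymm]
  have hLp2' : Lp * (L * Lp) = Lp := by rw [← mul_assoc]; exact hLp2
  have hPP : (L * Lp) * (L * Lp) = L * Lp := by rw [mul_assoc, hLp2']
  set r : Fin N → ℝ := iext - (L * Lp).mulVec iext with hrdef
  have hLr : L.mulVec r = 0 := by
    rw [hrdef, Matrix.mulVec_sub, Matrix.mulVec_mulVec, hLP, sub_self]
  have hCtr : Cᵀ.mulVec r = 0 := by
    have hq : (Cᵀ.mulVec r) ⬝ᵥ (Cᵀ.mulVec r) = 0 := by
      have h0 : r ⬝ᵥ L.mulVec r = 0 := by rw [hLr, dotProduct_zero]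
      rw [hL, ← Matrix.mulVec_mulVec, Matrix.dotProduct_mulVec, ← Matrix.mulVec_transpose] at h0
      exact h0
    exact dotProduct_self_eq_zero.mp hq
  obtain ⟨a, ha⟩ := hconn r hCtr
  have h1 : r ⬝ᵥ iext = 0 := by
    rw [ha]
    show ∑ u, a * iext u = 0
    rw [← Finset.mul_sum, hsum, mul_zero]
  have hPr : (L * Lp).mulVec r = 0 := by
    rw [hrdef, Matrix.mulVec_sub, Matrix.mulVec_mulVec, hPP, sub_self]
  have h2 : r ⬝ᵥ (L * Lp).mulVec iext = 0 := by
    rw [Matrix.dotProduct_mulVec, ← Matrix.mulVec_transpose, hLp3, hPr, zero_dotProduct]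
  have hrr : r ⬝ᵥ r = 0 := by
    have hdecomp : iext = r + (L * Lp).mulVec iext := by rw [hrdef, sub_add_cancel]
    have h3 : r ⬝ᵥ iext = r ⬝ᵥ r + r ⬝ᵥ (L * Lp).mulVec iext := by
      conv_lhs => rw [hdecomp]
      rw [dotProduct_add]
    rw [h1, h2, add_zero] at h3
    exact h3.symm
  have hr0 : r = 0 := dotProduct_self_eq_zero.mp hrr
  have hP : (L * Lp).mulVec iext = iext := by
    have := sub_eq_zero.mp hr0
    exact this.symm
  have hLv : L.mulVec v = iext := by rw [hv, Matrix.mulVec_mulVec]; exact hP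
  have hpart1 : C.mulVec (Cᵀ.mulVec v) = iext := by
    rw [Matrix.mulVec_mulVec, ← hL, hLv]
  -- Part 2
  have hCbsymm : Cbᵀ = Cb := by
    simp [hCb, Matrix.fromBlocks_transpose]
  have hKey : Cbp * Cb * Cb = Cb := by
    calc Cbp * Cb * Cb = (Cbp * Cb)ᵀ * Cbᵀ := by rw [hCbp4, hCbsymm]
      _ = (Cb * (Cbp * Cb))ᵀ := by rw [← Matrix.transpose_mul]
      _ = (Cb * Cbp * Cb)ᵀ := by rw [← mul_assoc]
      _ = Cb := by rw [hCbp1, hCbsymm]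
  have h1' : Cb.mulVec (Sum.elim v (0 : Fin M → ℝ)) = Sum.elim (0 : Fin N → ℝ) (Cᵀ.mulVec v) := by
    rw [hCb, Matrix.fromBlocks_mulVec]
    simp
  have h2' : Cb.mulVec (Sum.elim (0 : Fin N → ℝ) (Cᵀ.mulVec v)) = Sum.elim iext (0 : Fin M → ℝ) := by
    rw [hCb, Matrix.fromBlocks_mulVec]
    simp [hpart1]
  have hfinal : Cbp.mulVec (Sum.elim iext (0 : Fin M → ℝ)) = Sum.elim (0 : Fin N → ℝ) (Cᵀ.mulVec v) := by
    rw [← h2', ← h1', Matrix.mulVec_mulVec, Matrix.mulVec_mulVec, hKey, h1']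
  have hCt : Cᵀ = Matrix.diagonal (fun e => (Real.sqrt (w e))⁻¹) * (Matrix.diagonal w * Bᵀ) := by
    rw [hC, Matrix.transpose_mul, Matrix.diagonal_transpose, ← Matrix.mul_assoc,
      Matrix.diagonal_mul_diagonal]
    have hfun : (fun e => Real.sqrt (w e)) = fun e => (Real.sqrt (w e))⁻¹ * w e := by
      funext e
      have hne : Real.sqrt (w e) ≠ 0 := ne_of_gt (Real.sqrt_pos.mpr (hw e))
      rw [eq_comm, inv_mul_eq_iff_eq_mul₀ hne]
      exact (Real.mul_self_sqrt (hw e).le).symm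
    rw [← hfun]
  refine ⟨⟨Cᵀ.mulVec v, hpart1⟩, ?_⟩
  rw [hfinal, hi, hCt, ← Matrix.mulVec_mulVec]
end
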